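/- Let Φ be the root system of type F₄ and let φ' = (1232) be the highest short root. The positive roots α with α ≥ φ' in the dominance order (i.e., α − φ' is a nonnegative combination of simple roots) are exactly the four roots of heights 8, 9, 10, 11: φ', φ'+α₃, φ'+α₂+α₃, and φ = (2342); these four roots are pairwise non-opposite and the corresponding root subgroups pairwise commute, i.e., the sum of any two of them is never a root. -/

import Mathlib

open scoped RealInnerProductSpace Pointwise

namespace Paper

variable {V : Type*} [NormedAddCommGroup V] [InnerProductSpace ℝ V]

/-- The orthogonal reflection in the hyperplane perpendicular to `α`
(by convention the identity if `α = 0`). -/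
noncomputable def sref (α : V) : V ≃ₗ[ℝ] V :=
  letI := Classical.propDecidable (α = 0)
  if h : α = 0 then LinearEquiv.refl ℝ V
  else
    Module.reflection (x := α) (f := (2 / ⟪α, α⟫) • (innerₛₗ ℝ α)) <| by
      have h' : ⟪α, α⟫ ≠ 0 := inner_self_ne_zero.mpr h
      have h2 : ((2 / ⟪α, α⟫) • (innerₛₗ ℝ α)) α = (2 / ⟪α, α⟫) * ⟪α, α⟫ := by
        simp
      rw [h2, div_mul_cancel₀ _ h']

/-- `Φ` is a (finite, reduced, crystallographic) root system in the real inner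
product space `V`. -/
structure IsRootSystem (Φ : Set V) : Prop where
  finite : Φ.Finite
  nonzero : (0 : V) ∉ Φ
  span_top : Submodule.span ℝ Φ = ⊤
  neg_mem : ∀ α ∈ Φ, -α ∈ Φ
  refl_mem : ∀ α ∈ Φ, ∀ β ∈ Φ, sref α β ∈ Φ
  crystallographic : ∀ α ∈ Φ, ∀ β ∈ Φ, ∃ m : ℤ, 2 * ⟪α, β⟫ / ⟪β, β⟫ = (m : ℝ)
  reduced : ∀ α ∈ Φ, ∀ t : ℝ, t • α ∈ Φ → t = 1 ∨ t = -1

/-- Irreducibility of a root system. -/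
def IsIrreducible (Φ : Set V) : Prop :=
  ∀ Φ₁ Φ₂ : Set V, Φ = Φ₁ ∪ Φ₂ → (∀ α ∈ Φ₁, ∀ β ∈ Φ₂, ⟪α, β⟫ = 0) →
    Φ₁ = ∅ ∨ Φ₂ = ∅

/-- `αs` is a system of simple roots for `Φ`, with corresponding set `Pos` of
positive roots. -/
structure IsBase {n : ℕ} (Φ : Set V) (αs : Fin n → V) (Pos : Set V) : Prop where
  mem : ∀ i, αs i ∈ Φ
  indep : LinearIndependent ℝ αs
  span_eq : Submodule.span ℝ (Set.range αs) = ⊤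
  pos_subset : Pos ⊆ Φ
  mem_pos_iff : ∀ β ∈ Φ, (β ∈ Pos ↔ ∃ c : Fin n → ℕ, β = ∑ i, (c i : ℝ) • αs i)
  pos_or_neg : ∀ β ∈ Φ, β ∈ Pos ∨ -β ∈ Pos

/-- The Weyl group of `Φ`: the subgroup of `GL(V)` generated by the reflections
in the roots. -/
noncomputable def weylGroup (Φ : Set V) : Subgroup (V ≃ₗ[ℝ] V) :=
  Subgroup.closure (sref '' Φ)

/-- The standard parabolic subgroup generated by the simple reflections `sref (αs i)`
for `i ∈ J`. -/
noncomputable def parab {n : ℕ} (αs : Fin n → V) (J : Set (Fin n)) :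
    Subgroup (V ≃ₗ[ℝ] V) :=
  Subgroup.closure ((fun i => sref (αs i)) '' J)

/-- The inversion set `Φ(w) = {β ∈ Φ⁺ : w⁻¹ β ∈ −Φ⁺}`. -/
def invSet (Pos : Set V) (w : V ≃ₗ[ℝ] V) : Set V :=
  {β ∈ Pos | -(w⁻¹ β) ∈ Pos}

/-- The length of a Weyl group element, as the number of inversions. -/
noncomputable def len (Pos : Set V) (w : V ≃ₗ[ℝ] V) : ℕ :=
  (invSet Pos w).ncard

/-- `φ` is the highest root of the positive system `Pos` with simple roots `αs`. -/
def IsHighestRoot {n : ℕ} (αs : Fin n → V) (Pos : Set V) (φ : V) : Prop :=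
  φ ∈ Pos ∧ ∀ β ∈ Pos, ∃ c : Fin n → ℕ, φ - β = ∑ i, (c i : ℝ) • αs i

/-- Adjacency in the Bourbaki-labelled Dynkin diagram of the `E`-series (nodes `1,…,8`). -/
def eAdj (i j : ℕ) : Prop :=
  (i, j) ∈ ([(1,3),(3,1),(3,4),(4,3),(4,5),(5,4),(5,6),(6,5),(6,7),(7,6),(7,8),(8,7),(2,4),(4,2)] :
    List (ℕ × ℕ))

instance (i j : ℕ) : Decidable (eAdj i j) := by unfold eAdj; infer_instance

/-- Cartan integers of the `E`-series (Bourbaki labelling, nodes `1,…,8`):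
`E₆`, `E₇` and `E₈` are obtained by restricting to nodes `1,…,n`. -/
def cartanE (i j : ℕ) : ℝ :=
  if i = j then 2 else if eAdj i j then -1 else 0

/-- Cartan integers of `F₄` (Bourbaki labelling, nodes `1,…,4`; `α₁, α₂` long,
`α₃, α₄` short), with the convention `C i j = 2(αᵢ,αⱼ)/(αⱼ,αⱼ)`. -/
def cartanF (i j : ℕ) : ℝ :=
  if i = j then 2 else
  if (i, j) ∈ ([(1,2),(2,1),(3,2),(3,4),(4,3)] : List (ℕ × ℕ)) then -1 else
  if (i, j) = (2,3) then -2 else 0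

/-- Cartan integers of `Aₙ` (nodes `1,…,n`). -/
def cartanA (i j : ℕ) : ℝ :=
  if i = j then 2 else if i + 1 = j ∨ j + 1 = i then -1 else 0

/-- The simple roots `αs` realise the Cartan matrix `C` (indexed by nodes `1,…,n`). -/
def CartanIs {n : ℕ} (αs : Fin n → V) (C : ℕ → ℕ → ℝ) : Prop :=
  ∀ i j : Fin n, 2 * ⟪αs i, αs j⟫ / ⟪αs j, αs j⟫ = C ((i : ℕ) + 1) ((j : ℕ) + 1)



lemma sref_apply' (α : V) (hα : α ≠ 0) (β : V) :
    sref α β = β - (2 / ⟪α,α⟫ * ⟪α,β⟫) • α := by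
  unfold sref
  rw [dif_neg hα, Module.reflection_apply]
  simp

lemma csLong {A P t : ℝ} (ht : 0 < t) (h : (A*t)*(A*t) ≤ 2*t*(P*t)) : (2*A)^2 ≤ 8*P := by
  nlinarith [mul_pos ht ht]

lemma csShort {A P t : ℝ} (ht : 0 < t) (h : (A*t)*(A*t) ≤ t*(P*t)) : (2*A)^2 ≤ 4*P := by
  nlinarith [mul_pos ht ht]

/-- auxiliary integer quantities for the enumeration -/
def qF (n1 n2 n3 n4 : ℕ) : ℤ :=
  2*(1+n1)^2+2*(2+n2)^2+(3+n3)^2+(2+n4)^2-2*(1+n1)*(2+n2)-2*(2+n2)*(3+n3)-(3+n3)*(2+n4)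
def a1F (n1 n2 : ℕ) : ℤ := 4*(1+n1)-2*(2+n2)
def a2F (n1 n2 n3 : ℕ) : ℤ := -2*(1+n1)+4*(2+n2)-2*(3+n3)
def a3F (n2 n3 n4 : ℕ) : ℤ := -2*(2+n2)+2*(3+n3)-(2+n4)
def a4F (n3 n4 : ℕ) : ℤ := -(3+n3)+2*(2+n4)

def cond4 (n1 n2 n3 n4 : ℕ) : Prop :=
  qF n1 n2 n3 n4 * (a1F n1 n2 / qF n1 n2 n3 n4) = a1F n1 n2 ∧
  qF n1 n2 n3 n4 * (a2F n1 n2 n3 / qF n1 n2 n3 n4) = a2F n1 n2 n3 ∧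
  qF n1 n2 n3 n4 * (a3F n2 n3 n4 / qF n1 n2 n3 n4) = a3F n2 n3 n4 ∧
  qF n1 n2 n3 n4 * (a4F n3 n4 / qF n1 n2 n3 n4) = a4F n3 n4 ∧
  (a1F n1 n2 / qF n1 n2 n3 n4)^2 * qF n1 n2 n3 n4 ≤ 8 ∧
  (a2F n1 n2 n3 / qF n1 n2 n3 n4)^2 * qF n1 n2 n3 n4 ≤ 8 ∧
  (a3F n2 n3 n4 / qF n1 n2 n3 n4)^2 * qF n1 n2 n3 n4 ≤ 4 ∧
  (a4F n3 n4 / qF n1 n2 n3 n4)^2 * qF n1 n2 n3 n4 ≤ 4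

instance cond4Dec (n1 n2 n3 n4 : ℕ) : Decidable (cond4 n1 n2 n3 n4) := by
  unfold cond4; infer_instance

def okb (n1 n2 n3 n4 : ℕ) : Bool :=
  !(decide (cond4 n1 n2 n3 n4)) ||
    decide ((n1,n2,n3,n4) = (0,0,0,0) ∨ (n1,n2,n3,n4) = (0,0,1,0) ∨
      (n1,n2,n3,n4) = (0,1,1,0) ∨ (n1,n2,n3,n4) = (1,1,1,0))

set_option maxRecDepth 100000 in
lemma okb_all : ((List.range 7).all fun n1 => (List.range 9).all fun n2 =>
    (List.range 10).all fun n3 => (List.range 4).all fun n4 => okb n1 n2 n3 n4) = true := by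
  decide

lemma paperEnum (n1 n2 n3 n4 : ℕ) (h1 : n1 < 7) (h2 : n2 < 9) (h3 : n3 < 10) (h4 : n4 < 4)
    (hc : cond4 n1 n2 n3 n4) :
    (n1,n2,n3,n4) = (0,0,0,0) ∨ (n1,n2,n3,n4) = (0,0,1,0) ∨
      (n1,n2,n3,n4) = (0,1,1,0) ∨ (n1,n2,n3,n4) = (1,1,1,0) := by
  have h := okb_all
  rw [List.all_eq_true] at h
  have h := h n1 (List.mem_range.mpr h1)
  rw [List.all_eq_true] at h
  have h := h n2 (List.mem_range.mpr h2)
  rw [List.all_eq_true] at h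
  have h := h n3 (List.mem_range.mpr h3)
  rw [List.all_eq_true] at h
  have h := h n4 (List.mem_range.mpr h4)
  rw [okb, decide_eq_true hc] at h
  simpa using of_decide_eq_true (by simpa using h)

set_option maxHeartbeats 40000000 in
theorem statement19 (Φ : Set V) (hΦ : IsRootSystem Φ)
    (αs : Fin 4 → V) (Pos : Set V) (hbase : IsBase Φ αs Pos)
    (hF : CartanIs αs cartanF)
    (φ' : V) (hφ' : φ' = αs 0 + (2 : ℝ) • αs 1 + (3 : ℝ) • αs 2 + (2 : ℝ) • αs 3)
    (φ : V) (hφ : φ = (2 : ℝ) • αs 0 + (3 : ℝ) • αs 1 + (4 : ℝ) • αs 2 + (2 : ℝ) • αs 3) :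
    ∀ D : Set V,
      D = {β ∈ Pos | ∃ c : Fin 4 → ℕ, β - φ' = ∑ i, (c i : ℝ) • αs i} →
      (D = {φ', φ' + αs 2, φ' + αs 1 + αs 2, φ} ∧ D.ncard = 4 ∧
        ∀ β ∈ D, ∀ γ ∈ D, β ≠ γ → β + γ ∉ Φ) := by
  intro D hD
  have hnz : ∀ i : Fin 4, αs i ≠ 0 := fun i h => hΦ.nonzero (h ▸ hbase.mem i)
  have hipos : ∀ i : Fin 4, (0:ℝ) < ⟪αs i, αs i⟫ :=
    fun i => lt_of_le_of_ne real_inner_self_nonneg (Ne.symm (inner_self_ne_zero.mpr (hnz i)))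
  have hn0 : ⟪αs 0, αs 0⟫ ≠ 0 := (hipos 0).ne'
  have hn1 : ⟪αs 1, αs 1⟫ ≠ 0 := (hipos 1).ne'
  have hn2 : ⟪αs 2, αs 2⟫ ≠ 0 := (hipos 2).ne'
  have hn3 : ⟪αs 3, αs 3⟫ ≠ 0 := (hipos 3).ne'
  set t : ℝ := ⟪αs 3, αs 3⟫ with htdef
  have ht : (0:ℝ) < t := hipos 3
  have ht' : t ≠ 0 := ne_of_gt ht
  have n3 : ⟪αs 3, αs 3⟫ = t := rfl
  have e23 : ⟪αs 2, αs 3⟫ = -(t/2) := by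
    have h := (div_eq_iff hn3).mp (hF 2 3 : 2*⟪αs 2, αs 3⟫/⟪αs 3, αs 3⟫ = cartanF 3 4)
    norm_num [cartanF, show ((0:Fin 4):ℕ) = 0 from rfl, show ((1:Fin 4):ℕ) = 1 from rfl, show ((2:Fin 4):ℕ) = 2 from rfl, show ((3:Fin 4):ℕ) = 3 from rfl] at h; linarith [n3]
  have e32 : ⟪αs 3, αs 2⟫ = -(t/2) := by rw [real_inner_comm]; exact e23
  have n2 : ⟪αs 2, αs 2⟫ = t := by
    have h := (div_eq_iff hn2).mp (hF 3 2 : 2*⟪αs 3, αs 2⟫/⟪αs 2, αs 2⟫ = cartanF 4 3)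
    norm_num [cartanF, show ((0:Fin 4):ℕ) = 0 from rfl, show ((1:Fin 4):ℕ) = 1 from rfl, show ((2:Fin 4):ℕ) = 2 from rfl, show ((3:Fin 4):ℕ) = 3 from rfl] at h; linarith [e32, real_inner_self_eq_norm_sq (αs 2)]
  have e12 : ⟪αs 1, αs 2⟫ = -t := by
    have h := (div_eq_iff hn2).mp (hF 1 2 : 2*⟪αs 1, αs 2⟫/⟪αs 2, αs 2⟫ = cartanF 2 3)
    norm_num [cartanF, show ((0:Fin 4):ℕ) = 0 from rfl, show ((1:Fin 4):ℕ) = 1 from rfl, show ((2:Fin 4):ℕ) = 2 from rfl, show ((3:Fin 4):ℕ) = 3 from rfl] at h; linarith [n2, real_inner_self_eq_norm_sq (αs 2)]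
  have e21 : ⟪αs 2, αs 1⟫ = -t := by rw [real_inner_comm]; exact e12
  have n1 : ⟪αs 1, αs 1⟫ = 2*t := by
    have h := (div_eq_iff hn1).mp (hF 2 1 : 2*⟪αs 2, αs 1⟫/⟪αs 1, αs 1⟫ = cartanF 3 2)
    norm_num [cartanF, show ((0:Fin 4):ℕ) = 0 from rfl, show ((1:Fin 4):ℕ) = 1 from rfl, show ((2:Fin 4):ℕ) = 2 from rfl, show ((3:Fin 4):ℕ) = 3 from rfl] at h; linarith [e21, real_inner_self_eq_norm_sq (αs 1)]
  have e01 : ⟪αs 0, αs 1⟫ = -t := by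
    have h := (div_eq_iff hn1).mp (hF 0 1 : 2*⟪αs 0, αs 1⟫/⟪αs 1, αs 1⟫ = cartanF 1 2)
    norm_num [cartanF, show ((0:Fin 4):ℕ) = 0 from rfl, show ((1:Fin 4):ℕ) = 1 from rfl, show ((2:Fin 4):ℕ) = 2 from rfl, show ((3:Fin 4):ℕ) = 3 from rfl] at h; linarith [n1, real_inner_self_eq_norm_sq (αs 1)]
  have e10 : ⟪αs 1, αs 0⟫ = -t := by rw [real_inner_comm]; exact e01
  have n0 : ⟪αs 0, αs 0⟫ = 2*t := by
    have h := (div_eq_iff hn0).mp (hF 1 0 : 2*⟪αs 1, αs 0⟫/⟪αs 0, αs 0⟫ = cartanF 2 1)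
    norm_num [cartanF, show ((0:Fin 4):ℕ) = 0 from rfl, show ((1:Fin 4):ℕ) = 1 from rfl, show ((2:Fin 4):ℕ) = 2 from rfl, show ((3:Fin 4):ℕ) = 3 from rfl] at h; linarith [e10, real_inner_self_eq_norm_sq (αs 0)]
  have e02 : ⟪αs 0, αs 2⟫ = 0 := by
    have h := (div_eq_iff hn2).mp (hF 0 2 : 2*⟪αs 0, αs 2⟫/⟪αs 2, αs 2⟫ = cartanF 1 3)
    norm_num [cartanF, show ((0:Fin 4):ℕ) = 0 from rfl, show ((1:Fin 4):ℕ) = 1 from rfl, show ((2:Fin 4):ℕ) = 2 from rfl, show ((3:Fin 4):ℕ) = 3 from rfl] at h; linarith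
  have e20 : ⟪αs 2, αs 0⟫ = 0 := by rw [real_inner_comm]; exact e02
  have e03 : ⟪αs 0, αs 3⟫ = 0 := by
    have h := (div_eq_iff hn3).mp (hF 0 3 : 2*⟪αs 0, αs 3⟫/⟪αs 3, αs 3⟫ = cartanF 1 4)
    norm_num [cartanF, show ((0:Fin 4):ℕ) = 0 from rfl, show ((1:Fin 4):ℕ) = 1 from rfl, show ((2:Fin 4):ℕ) = 2 from rfl, show ((3:Fin 4):ℕ) = 3 from rfl] at h; linarith
  have e30 : ⟪αs 3, αs 0⟫ = 0 := by rw [real_inner_comm]; exact e03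
  have e13 : ⟪αs 1, αs 3⟫ = 0 := by
    have h := (div_eq_iff hn3).mp (hF 1 3 : 2*⟪αs 1, αs 3⟫/⟪αs 3, αs 3⟫ = cartanF 2 4)
    norm_num [cartanF, show ((0:Fin 4):ℕ) = 0 from rfl, show ((1:Fin 4):ℕ) = 1 from rfl, show ((2:Fin 4):ℕ) = 2 from rfl, show ((3:Fin 4):ℕ) = 3 from rfl] at h; linarith
  have e31 : ⟪αs 3, αs 1⟫ = 0 := by rw [real_inner_comm]; exact e13
  -- inner products with combos
  have hip0 : ∀ x1 x2 x3 x4 : ℝ,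
      ⟪αs 0, x1 • αs 0 + x2 • αs 1 + x3 • αs 2 + x4 • αs 3⟫ = (2*x1 - x2)*t := by
    intro x1 x2 x3 x4
    simp only [inner_add_right, real_inner_smul_right, n0, e01, e02, e03]; ring
  have hip1 : ∀ x1 x2 x3 x4 : ℝ,
      ⟪αs 1, x1 • αs 0 + x2 • αs 1 + x3 • αs 2 + x4 • αs 3⟫ = (2*x2 - x1 - x3)*t := by
    intro x1 x2 x3 x4
    simp only [inner_add_right, real_inner_smul_right, e10, n1, e12, e13]; ring
  have hip2 : ∀ x1 x2 x3 x4 : ℝ,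
      ⟪αs 2, x1 • αs 0 + x2 • αs 1 + x3 • αs 2 + x4 • αs 3⟫ = (x3 - x2 - x4/2)*t := by
    intro x1 x2 x3 x4
    simp only [inner_add_right, real_inner_smul_right, e20, e21, n2, e23]; ring
  have hip3 : ∀ x1 x2 x3 x4 : ℝ,
      ⟪αs 3, x1 • αs 0 + x2 • αs 1 + x3 • αs 2 + x4 • αs 3⟫ = (x4 - x3/2)*t := by
    intro x1 x2 x3 x4
    simp only [inner_add_right, real_inner_smul_right, e30, e31, e32, n3]; ring
  have hinner : ∀ b1 b2 b3 b4 c1 c2 c3 c4 : ℝ,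
      ⟪b1 • αs 0 + b2 • αs 1 + b3 • αs 2 + b4 • αs 3,
        c1 • αs 0 + c2 • αs 1 + c3 • αs 2 + c4 • αs 3⟫
      = (2*b1*c1 + 2*b2*c2 + b3*c3 + b4*c4 - b1*c2 - b2*c1 - b2*c3 - b3*c2
          - b3*c4/2 - b4*c3/2)*t := by
    intro b1 b2 b3 b4 c1 c2 c3 c4
    simp only [inner_add_left, real_inner_smul_left, hip0, hip1, hip2, hip3]; ring
  have hstep : ∀ i : Fin 4, ∀ v : V, v ∈ Φ → v - (2/⟪αs i, αs i⟫ * ⟪αs i, v⟫) • αs i ∈ Φ := by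
    intro i v hv
    have h := hΦ.refl_mem (αs i) (hbase.mem i) v hv
    rwa [sref_apply' (αs i) (hnz i)] at h
  have refl0 : ∀ b1 b2 b3 b4 b1' : ℝ, b1' = b2 - b1 →
      b1 • αs 0 + b2 • αs 1 + b3 • αs 2 + b4 • αs 3 ∈ Φ →
      b1' • αs 0 + b2 • αs 1 + b3 • αs 2 + b4 • αs 3 ∈ Φ := by
    intro b1 b2 b3 b4 b1' hb hv
    have h := hstep 0 _ hv
    rw [hip0 b1 b2 b3 b4, n0, show 2/(2*t) * ((2*b1 - b2)*t) = 2*b1 - b2 by field_simp] at h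
    rwa [show b1 • αs 0 + b2 • αs 1 + b3 • αs 2 + b4 • αs 3 - (2*b1 - b2) • αs 0
        = b1' • αs 0 + b2 • αs 1 + b3 • αs 2 + b4 • αs 3 by rw [hb]; module] at h
  have refl1 : ∀ b1 b2 b3 b4 b2' : ℝ, b2' = b1 + b3 - b2 →
      b1 • αs 0 + b2 • αs 1 + b3 • αs 2 + b4 • αs 3 ∈ Φ →
      b1 • αs 0 + b2' • αs 1 + b3 • αs 2 + b4 • αs 3 ∈ Φ := by
    intro b1 b2 b3 b4 b2' hb hv
    have h := hstep 1 _ hv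
    rw [hip1 b1 b2 b3 b4, n1,
      show 2/(2*t) * ((2*b2 - b1 - b3)*t) = 2*b2 - b1 - b3 by field_simp] at h
    rwa [show b1 • αs 0 + b2 • αs 1 + b3 • αs 2 + b4 • αs 3 - (2*b2 - b1 - b3) • αs 1
        = b1 • αs 0 + b2' • αs 1 + b3 • αs 2 + b4 • αs 3 by rw [hb]; module] at h
  have refl2 : ∀ b1 b2 b3 b4 b3' : ℝ, b3' = 2*b2 + b4 - b3 →
      b1 • αs 0 + b2 • αs 1 + b3 • αs 2 + b4 • αs 3 ∈ Φ →
      b1 • αs 0 + b2 • αs 1 + b3' • αs 2 + b4 • αs 3 ∈ Φ := by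
    intro b1 b2 b3 b4 b3' hb hv
    have h := hstep 2 _ hv
    rw [hip2 b1 b2 b3 b4, n2,
      show 2/t * ((b3 - b2 - b4/2)*t) = 2*b3 - 2*b2 - b4 by field_simp] at h
    rwa [show b1 • αs 0 + b2 • αs 1 + b3 • αs 2 + b4 • αs 3 - (2*b3 - 2*b2 - b4) • αs 2
        = b1 • αs 0 + b2 • αs 1 + b3' • αs 2 + b4 • αs 3 by rw [hb]; module] at h
  have refl3 : ∀ b1 b2 b3 b4 b4' : ℝ, b4' = b3 - b4 →
      b1 • αs 0 + b2 • αs 1 + b3 • αs 2 + b4 • αs 3 ∈ Φ →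
      b1 • αs 0 + b2 • αs 1 + b3 • αs 2 + b4' • αs 3 ∈ Φ := by
    intro b1 b2 b3 b4 b4' hb hv
    have h := hstep 3 _ hv
    rw [hip3 b1 b2 b3 b4, n3,
      show 2/t * ((b4 - b3/2)*t) = 2*b4 - b3 by field_simp] at h
    rwa [show b1 • αs 0 + b2 • αs 1 + b3 • αs 2 + b4 • αs 3 - (2*b4 - b3) • αs 3
        = b1 • αs 0 + b2 • αs 1 + b3 • αs 2 + b4' • αs 3 by rw [hb]; module] at h
  -- the four roots as combos
  have r0010 : (0:ℝ) • αs 0 + (0:ℝ) • αs 1 + (1:ℝ) • αs 2 + (0:ℝ) • αs 3 ∈ Φ := by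
    have h := hbase.mem 2
    rwa [show αs 2 = (0:ℝ) • αs 0 + (0:ℝ) • αs 1 + (1:ℝ) • αs 2 + (0:ℝ) • αs 3 by module] at h
  have r1000 : (1:ℝ) • αs 0 + (0:ℝ) • αs 1 + (0:ℝ) • αs 2 + (0:ℝ) • αs 3 ∈ Φ := by
    have h := hbase.mem 0
    rwa [show αs 0 = (1:ℝ) • αs 0 + (0:ℝ) • αs 1 + (0:ℝ) • αs 2 + (0:ℝ) • αs 3 by module] at h
  -- chain to φ' = (1,2,3,2)
  have r0110 := refl1 0 0 1 0 1 (by norm_num) r0010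
  have r1110 := refl0 0 1 1 0 1 (by norm_num) r0110
  have r1111 := refl3 1 1 1 0 1 (by norm_num) r1110
  have r1121 := refl2 1 1 1 1 2 (by norm_num) r1111
  have r1221 := refl1 1 1 2 1 2 (by norm_num) r1121
  have r1231 := refl2 1 2 2 1 3 (by norm_num) r1221
  have rA : (1:ℝ) • αs 0 + (2:ℝ) • αs 1 + (3:ℝ) • αs 2 + (2:ℝ) • αs 3 ∈ Φ :=
    refl3 1 2 3 1 2 (by norm_num) r1231
  -- chain to (1,2,4,2), (1,3,4,2), (2,3,4,2)
  have r1100 := refl1 1 0 0 0 1 (by norm_num) r1000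
  have r1120 := refl2 1 1 0 0 2 (by norm_num) r1100
  have r1220 := refl1 1 1 2 0 2 (by norm_num) r1120
  have r1222 := refl3 1 2 2 0 2 (by norm_num) r1220
  have rB : (1:ℝ) • αs 0 + (2:ℝ) • αs 1 + (4:ℝ) • αs 2 + (2:ℝ) • αs 3 ∈ Φ :=
    refl2 1 2 2 2 4 (by norm_num) r1222
  have rC : (1:ℝ) • αs 0 + (3:ℝ) • αs 1 + (4:ℝ) • αs 2 + (2:ℝ) • αs 3 ∈ Φ :=
    refl1 1 2 4 2 3 (by norm_num) rB
  have rD : (2:ℝ) • αs 0 + (3:ℝ) • αs 1 + (4:ℝ) • αs 2 + (2:ℝ) • αs 3 ∈ Φ :=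
    refl0 1 3 4 2 2 (by norm_num) rC
  -- classification of elements of D
  have hclass : ∀ β, β ∈ D → β = φ' ∨ β = φ' + αs 2 ∨ β = φ' + αs 1 + αs 2 ∨ β = φ := by
    intro β hβ
    rw [hD] at hβ
    obtain ⟨hposβ, c, hc⟩ := hβ
    have hβΦ := hbase.pos_subset hposβ
    rw [Fin.sum_univ_four] at hc
    have hβL : β = (1+(c 0:ℝ)) • αs 0 + (2+(c 1:ℝ)) • αs 1 + (3+(c 2:ℝ)) • αs 2 + (2+(c 3:ℝ)) • αs 3 := by
      linear_combination (norm := module) hc + hφ'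
    have hβ0 : β ≠ 0 := fun h => hΦ.nonzero (h ▸ hβΦ)
    have hββpos : (0:ℝ) < ⟪β,β⟫ :=
      lt_of_le_of_ne real_inner_self_nonneg (Ne.symm (inner_self_ne_zero.mpr hβ0))
    have hββne : ⟪β,β⟫ ≠ 0 := ne_of_gt hββpos
    have hbbeq : ⟪β,β⟫ = (2*(1+(c 0:ℝ))^2+2*(2+(c 1:ℝ))^2+(3+(c 2:ℝ))^2+(2+(c 3:ℝ))^2-2*(1+(c 0:ℝ))*(2+(c 1:ℝ))-2*(2+(c 1:ℝ))*(3+(c 2:ℝ))-(3+(c 2:ℝ))*(2+(c 3:ℝ)))*t := by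
      rw [hβL, hinner]; ring
    have hQpos : (0:ℤ) < qF (c 0) (c 1) (c 2) (c 3) := by
      have hr : (0:ℝ) < ((qF (c 0) (c 1) (c 2) (c 3) : ℤ) : ℝ) := by
        push_cast [qF]
        nlinarith [hββpos, hbbeq, ht]
      exact_mod_cast hr
    have hQne : qF (c 0) (c 1) (c 2) (c 3) ≠ 0 := ne_of_gt hQpos
    obtain ⟨m0, hm0⟩ := hΦ.crystallographic (αs 0) (hbase.mem 0) β hβΦ
    have h0 := (div_eq_iff hββne).mp hm0
    rw [hbbeq, hβL, hip0] at h0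
    have z0 : a1F (c 0) (c 1) = m0 * qF (c 0) (c 1) (c 2) (c 3) := by
      have hr : ((a1F (c 0) (c 1) : ℤ) : ℝ) = ((m0 * qF (c 0) (c 1) (c 2) (c 3) : ℤ) : ℝ) := by
        push_cast [a1F, a2F, a3F, a4F, qF]
        have e0 := mul_right_cancel₀ ht' (show (2*(2*(1+(c 0:ℝ)) - (2+(c 1:ℝ))))*t = ((m0:ℝ)*(2*(1+(c 0:ℝ))^2+2*(2+(c 1:ℝ))^2+(3+(c 2:ℝ))^2+(2+(c 3:ℝ))^2-2*(1+(c 0:ℝ))*(2+(c 1:ℝ))-2*(2+(c 1:ℝ))*(3+(c 2:ℝ))-(3+(c 2:ℝ))*(2+(c 3:ℝ))))*t by linear_combination h0)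
        linear_combination e0
      exact_mod_cast hr
    have hcs0 := real_inner_mul_inner_self_le (αs 0) β
    rw [hbbeq, hβL, hip0, n0] at hcs0
    have zc0 : (a1F (c 0) (c 1))^2 ≤ 8 * qF (c 0) (c 1) (c 2) (c 3) := by
      have hr : ((a1F (c 0) (c 1) : ℤ):ℝ)^2 ≤ ((8 * qF (c 0) (c 1) (c 2) (c 3) : ℤ):ℝ) := by
        push_cast [a1F, a2F, a3F, a4F, qF]
        linarith [csLong ht hcs0]
      exact_mod_cast hr
    have hm0b : m0^2 * qF (c 0) (c 1) (c 2) (c 3) ≤ 8 := by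
      have ha2 : (m0 * qF (c 0) (c 1) (c 2) (c 3))^2 ≤ 8 * qF (c 0) (c 1) (c 2) (c 3) := by
        rw [← z0]; exact zc0
      nlinarith [ha2, hQpos]
    obtain ⟨m1, hm1⟩ := hΦ.crystallographic (αs 1) (hbase.mem 1) β hβΦ
    have h1 := (div_eq_iff hββne).mp hm1
    rw [hbbeq, hβL, hip1] at h1
    have z1 : a2F (c 0) (c 1) (c 2) = m1 * qF (c 0) (c 1) (c 2) (c 3) := by
      have hr : ((a2F (c 0) (c 1) (c 2) : ℤ) : ℝ) = ((m1 * qF (c 0) (c 1) (c 2) (c 3) : ℤ) : ℝ) := by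
        push_cast [a1F, a2F, a3F, a4F, qF]
        have e1 := mul_right_cancel₀ ht' (show (2*(2*(2+(c 1:ℝ)) - (1+(c 0:ℝ)) - (3+(c 2:ℝ))))*t = ((m1:ℝ)*(2*(1+(c 0:ℝ))^2+2*(2+(c 1:ℝ))^2+(3+(c 2:ℝ))^2+(2+(c 3:ℝ))^2-2*(1+(c 0:ℝ))*(2+(c 1:ℝ))-2*(2+(c 1:ℝ))*(3+(c 2:ℝ))-(3+(c 2:ℝ))*(2+(c 3:ℝ))))*t by linear_combination h1)
        linear_combination e1
      exact_mod_cast hr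
    have hcs1 := real_inner_mul_inner_self_le (αs 1) β
    rw [hbbeq, hβL, hip1, n1] at hcs1
    have zc1 : (a2F (c 0) (c 1) (c 2))^2 ≤ 8 * qF (c 0) (c 1) (c 2) (c 3) := by
      have hr : ((a2F (c 0) (c 1) (c 2) : ℤ):ℝ)^2 ≤ ((8 * qF (c 0) (c 1) (c 2) (c 3) : ℤ):ℝ) := by
        push_cast [a1F, a2F, a3F, a4F, qF]
        linarith [csLong ht hcs1]
      exact_mod_cast hr
    have hm1b : m1^2 * qF (c 0) (c 1) (c 2) (c 3) ≤ 8 := by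
      have ha2 : (m1 * qF (c 0) (c 1) (c 2) (c 3))^2 ≤ 8 * qF (c 0) (c 1) (c 2) (c 3) := by
        rw [← z1]; exact zc1
      nlinarith [ha2, hQpos]
    obtain ⟨m2, hm2⟩ := hΦ.crystallographic (αs 2) (hbase.mem 2) β hβΦ
    have h2 := (div_eq_iff hββne).mp hm2
    rw [hbbeq, hβL, hip2] at h2
    have z2 : a3F (c 1) (c 2) (c 3) = m2 * qF (c 0) (c 1) (c 2) (c 3) := by
      have hr : ((a3F (c 1) (c 2) (c 3) : ℤ) : ℝ) = ((m2 * qF (c 0) (c 1) (c 2) (c 3) : ℤ) : ℝ) := by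
        push_cast [a1F, a2F, a3F, a4F, qF]
        have e2 := mul_right_cancel₀ ht' (show (2*((3+(c 2:ℝ)) - (2+(c 1:ℝ)) - (2+(c 3:ℝ))/2))*t = ((m2:ℝ)*(2*(1+(c 0:ℝ))^2+2*(2+(c 1:ℝ))^2+(3+(c 2:ℝ))^2+(2+(c 3:ℝ))^2-2*(1+(c 0:ℝ))*(2+(c 1:ℝ))-2*(2+(c 1:ℝ))*(3+(c 2:ℝ))-(3+(c 2:ℝ))*(2+(c 3:ℝ))))*t by linear_combination h2)
        linear_combination e2
      exact_mod_cast hr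
    have hcs2 := real_inner_mul_inner_self_le (αs 2) β
    rw [hbbeq, hβL, hip2, n2] at hcs2
    have zc2 : (a3F (c 1) (c 2) (c 3))^2 ≤ 4 * qF (c 0) (c 1) (c 2) (c 3) := by
      have hr : ((a3F (c 1) (c 2) (c 3) : ℤ):ℝ)^2 ≤ ((4 * qF (c 0) (c 1) (c 2) (c 3) : ℤ):ℝ) := by
        push_cast [a1F, a2F, a3F, a4F, qF]
        linarith [csShort ht hcs2]
      exact_mod_cast hr
    have hm2b : m2^2 * qF (c 0) (c 1) (c 2) (c 3) ≤ 4 := by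
      have ha2 : (m2 * qF (c 0) (c 1) (c 2) (c 3))^2 ≤ 4 * qF (c 0) (c 1) (c 2) (c 3) := by
        rw [← z2]; exact zc2
      nlinarith [ha2, hQpos]
    obtain ⟨m3, hm3⟩ := hΦ.crystallographic (αs 3) (hbase.mem 3) β hβΦ
    have h3 := (div_eq_iff hββne).mp hm3
    rw [hbbeq, hβL, hip3] at h3
    have z3 : a4F (c 2) (c 3) = m3 * qF (c 0) (c 1) (c 2) (c 3) := by
      have hr : ((a4F (c 2) (c 3) : ℤ) : ℝ) = ((m3 * qF (c 0) (c 1) (c 2) (c 3) : ℤ) : ℝ) := by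
        push_cast [a1F, a2F, a3F, a4F, qF]
        have e3 := mul_right_cancel₀ ht' (show (2*((2+(c 3:ℝ)) - (3+(c 2:ℝ))/2))*t = ((m3:ℝ)*(2*(1+(c 0:ℝ))^2+2*(2+(c 1:ℝ))^2+(3+(c 2:ℝ))^2+(2+(c 3:ℝ))^2-2*(1+(c 0:ℝ))*(2+(c 1:ℝ))-2*(2+(c 1:ℝ))*(3+(c 2:ℝ))-(3+(c 2:ℝ))*(2+(c 3:ℝ))))*t by linear_combination h3)
        linear_combination e3
      exact_mod_cast hr
    have hcs3 := real_inner_mul_inner_self_le (αs 3) β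
    rw [hbbeq, hβL, hip3, n3] at hcs3
    have zc3 : (a4F (c 2) (c 3))^2 ≤ 4 * qF (c 0) (c 1) (c 2) (c 3) := by
      have hr : ((a4F (c 2) (c 3) : ℤ):ℝ)^2 ≤ ((4 * qF (c 0) (c 1) (c 2) (c 3) : ℤ):ℝ) := by
        push_cast [a1F, a2F, a3F, a4F, qF]
        linarith [csShort ht hcs3]
      exact_mod_cast hr
    have hm3b : m3^2 * qF (c 0) (c 1) (c 2) (c 3) ≤ 4 := by
      have ha2 : (m3 * qF (c 0) (c 1) (c 2) (c 3))^2 ≤ 4 * qF (c 0) (c 1) (c 2) (c 3) := by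
        rw [← z3]; exact zc3
      nlinarith [ha2, hQpos]
    -- q is at most 8
    have hone : ∀ m : ℤ, m ≠ 0 → m^2 * qF (c 0) (c 1) (c 2) (c 3) ≤ 8 →
        qF (c 0) (c 1) (c 2) (c 3) ≤ 8 := by
      intro m hm hb
      have h1 : 1 ≤ m^2 := by rcases hm.lt_or_gt with h|h <;> nlinarith
      nlinarith [hQpos]
    have hQ8 : qF (c 0) (c 1) (c 2) (c 3) ≤ 8 := by
      by_cases hz0 : m0 = 0
      · by_cases hz1 : m1 = 0
        · by_cases hz2 : m2 = 0
          · by_cases hz3 : m3 = 0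
            · exfalso
              rw [hz0, zero_mul] at z0; rw [hz1, zero_mul] at z1
              rw [hz2, zero_mul] at z2; rw [hz3, zero_mul] at z3
              simp only [a1F, a2F, a3F, a4F] at z0 z1 z2 z3
              omega
            · exact hone m3 hz3 (hm3b.trans (by norm_num))
          · exact hone m2 hz2 (hm2b.trans (by norm_num))
        · exact hone m1 hz1 hm1b
      · exact hone m0 hz0 hm0b
    have hq8' : (2*(1+(c 0:ℤ))^2+2*(2+(c 1:ℤ))^2+(3+(c 2:ℤ))^2+(2+(c 3:ℤ))^2
        -2*(1+(c 0:ℤ))*(2+(c 1:ℤ))-2*(2+(c 1:ℤ))*(3+(c 2:ℤ))-(3+(c 2:ℤ))*(2+(c 3:ℤ))) ≤ 8 := by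
      have := hQ8; simp only [qF] at this; linarith
    have b4 : (c 3:ℤ) ≤ 3 := by
      nlinarith [hq8', sq_nonneg (2*(1+(c 0:ℤ))-(2+(c 1:ℤ))), sq_nonneg (3*(2+(c 1:ℤ))-2*(3+(c 2:ℤ))),
        sq_nonneg (2*(3+(c 2:ℤ))-3*(2+(c 3:ℤ))), sq_nonneg ((2+(c 3:ℤ))-6)]
    have b3 : (c 2:ℤ) ≤ 9 := by
      nlinarith [hq8', b4, sq_nonneg (2*(1+(c 0:ℤ))-(2+(c 1:ℤ))), sq_nonneg (3*(2+(c 1:ℤ))-2*(3+(c 2:ℤ))),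
        sq_nonneg (2+(c 3:ℤ)), sq_nonneg (2*(3+(c 2:ℤ))-3*(2+(c 3:ℤ))-10)]
    have b2 : (c 1:ℤ) ≤ 8 := by
      nlinarith [hq8', b3, sq_nonneg (2*(1+(c 0:ℤ))-(2+(c 1:ℤ))), sq_nonneg (2*(3+(c 2:ℤ))-3*(2+(c 3:ℤ))),
        sq_nonneg (2+(c 3:ℤ)), sq_nonneg (3*(2+(c 1:ℤ))-2*(3+(c 2:ℤ))-7)]
    have b1 : (c 0:ℤ) ≤ 6 := by
      nlinarith [hq8', b2, sq_nonneg (3*(2+(c 1:ℤ))-2*(3+(c 2:ℤ))), sq_nonneg (2*(3+(c 2:ℤ))-3*(2+(c 3:ℤ))),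
        sq_nonneg (2+(c 3:ℤ)), sq_nonneg (2*(1+(c 0:ℤ))-(2+(c 1:ℤ))-5)]
    have hcond : cond4 (c 0) (c 1) (c 2) (c 3) := by
      refine ⟨?_, ?_, ?_, ?_, ?_, ?_, ?_, ?_⟩
      · rw [z0, Int.mul_ediv_cancel _ hQne]; exact mul_comm _ _
      · rw [z1, Int.mul_ediv_cancel _ hQne]; exact mul_comm _ _
      · rw [z2, Int.mul_ediv_cancel _ hQne]; exact mul_comm _ _
      · rw [z3, Int.mul_ediv_cancel _ hQne]; exact mul_comm _ _
      · rw [z0, Int.mul_ediv_cancel _ hQne]; exact hm0b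
      · rw [z1, Int.mul_ediv_cancel _ hQne]; exact hm1b
      · rw [z2, Int.mul_ediv_cancel _ hQne]; exact hm2b
      · rw [z3, Int.mul_ediv_cancel _ hQne]; exact hm3b
    have hres := paperEnum (c 0) (c 1) (c 2) (c 3) (by omega) (by omega) (by omega) (by omega) hcond
    rcases hres with h|h|h|h
    · simp only [Prod.mk.injEq] at h
      obtain ⟨h1, h2, h3, h4⟩ := h
      rw [h1, h2, h3, h4] at hβL
      left; rw [hβL, hφ']; push_cast; module
    · simp only [Prod.mk.injEq] at h
      obtain ⟨h1, h2, h3, h4⟩ := h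
      rw [h1, h2, h3, h4] at hβL
      right; left; rw [hβL, hφ']; push_cast; module
    · simp only [Prod.mk.injEq] at h
      obtain ⟨h1, h2, h3, h4⟩ := h
      rw [h1, h2, h3, h4] at hβL
      right; right; left; rw [hβL, hφ']; push_cast; module
    · simp only [Prod.mk.injEq] at h
      obtain ⟨h1, h2, h3, h4⟩ := h
      rw [h1, h2, h3, h4] at hβL
      right; right; right; rw [hβL, hφ]; push_cast; module
  -- target vectors as combos
  have hX1 : φ' = (1:ℝ) • αs 0 + (2:ℝ) • αs 1 + (3:ℝ) • αs 2 + (2:ℝ) • αs 3 := by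
    rw [hφ']; module
  have hX2 : φ' + αs 2 = (1:ℝ) • αs 0 + (2:ℝ) • αs 1 + (4:ℝ) • αs 2 + (2:ℝ) • αs 3 := by
    rw [hφ']; module
  have hX3 : φ' + αs 1 + αs 2 = (1:ℝ) • αs 0 + (3:ℝ) • αs 1 + (4:ℝ) • αs 2 + (2:ℝ) • αs 3 := by
    rw [hφ']; module
  have hX4 : φ = (2:ℝ) • αs 0 + (3:ℝ) • αs 1 + (4:ℝ) • αs 2 + (2:ℝ) • αs 3 := hφ
  have hsum4 : ∀ a1 a2 a3 a4 : ℕ, (∑ i, ((![a1,a2,a3,a4] i : ℕ):ℝ) • αs i)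
      = (a1:ℝ) • αs 0 + (a2:ℝ) • αs 1 + (a3:ℝ) • αs 2 + (a4:ℝ) • αs 3 := by
    intro a1 a2 a3 a4
    rw [Fin.sum_univ_four]
    simp
  have hPos : ∀ (a1 a2 a3 a4 : ℕ) (v : V),
      v = (a1:ℝ) • αs 0 + (a2:ℝ) • αs 1 + (a3:ℝ) • αs 2 + (a4:ℝ) • αs 3 → v ∈ Φ → v ∈ Pos := by
    intro a1 a2 a3 a4 v hv hΦv
    refine (hbase.mem_pos_iff v hΦv).mpr ⟨![a1,a2,a3,a4], ?_⟩
    rw [hsum4]; exact hv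
  have hD1 : φ' ∈ D := by
    rw [hD]
    exact ⟨hPos 1 2 3 2 φ' (by push_cast; exact hX1) (by rw [hX1]; exact rA),
      ![0,0,0,0], by rw [hsum4]; push_cast; module⟩
  have hD2 : φ' + αs 2 ∈ D := by
    rw [hD]
    exact ⟨hPos 1 2 4 2 _ (by push_cast; exact hX2) (by rw [hX2]; exact rB),
      ![0,0,1,0], by rw [hsum4]; push_cast; module⟩
  have hD3 : φ' + αs 1 + αs 2 ∈ D := by
    rw [hD]
    exact ⟨hPos 1 3 4 2 _ (by push_cast; exact hX3) (by rw [hX3]; exact rC),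
      ![0,1,1,0], by rw [hsum4]; push_cast; module⟩
  have hD4 : φ ∈ D := by
    rw [hD]
    exact ⟨hPos 2 3 4 2 _ (by push_cast; exact hX4) (by rw [hX4]; exact rD),
      ![1,1,1,0], by rw [hsum4]; push_cast; rw [hφ, hφ']; module⟩
  have hDeq : D = {φ', φ' + αs 2, φ' + αs 1 + αs 2, φ} := by
    ext β
    constructor
    · intro hβ
      have := hclass β hβ
      simpa [Set.mem_insert_iff, Set.mem_singleton_iff] using this
    · intro hβ
      simp only [Set.mem_insert_iff, Set.mem_singleton_iff] at hβ
      rcases hβ with rfl|rfl|rfl|rfl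
      exacts [hD1, hD2, hD3, hD4]
  -- distinctness
  have hcoef : ∀ x1 x2 x3 x4 : ℝ, x1 • αs 0 + x2 • αs 1 + x3 • αs 2 + x4 • αs 3 = 0 →
      x1 = 0 ∧ x2 = 0 ∧ x3 = 0 ∧ x4 = 0 := by
    intro x1 x2 x3 x4 h
    have h2 := Fintype.linearIndependent_iff.mp hbase.indep ![x1,x2,x3,x4]
      (by rw [Fin.sum_univ_four]; simpa using h)
    exact ⟨by simpa using h2 0, by simpa using h2 1, by simpa using h2 2, by simpa using h2 3⟩
  have hne12 : φ' ≠ φ' + αs 2 := by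
    intro h
    have h0 : (0:ℝ) • αs 0 + (0:ℝ) • αs 1 + (1:ℝ) • αs 2 + (0:ℝ) • αs 3 = 0 := by
      linear_combination (norm := module) hX1 - hX2 - h
    simpa using (hcoef _ _ _ _ h0).2.2.1
  have hne13 : φ' ≠ φ' + αs 1 + αs 2 := by
    intro h
    have h0 : (0:ℝ) • αs 0 + (1:ℝ) • αs 1 + (1:ℝ) • αs 2 + (0:ℝ) • αs 3 = 0 := by
      linear_combination (norm := module) hX1 - hX3 - h
    simpa using (hcoef _ _ _ _ h0).2.1
  have hne14 : φ' ≠ φ := by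
    intro h
    have h0 : (1:ℝ) • αs 0 + (1:ℝ) • αs 1 + (1:ℝ) • αs 2 + (0:ℝ) • αs 3 = 0 := by
      linear_combination (norm := module) hX1 - hX4 - h
    simpa using (hcoef _ _ _ _ h0).1
  have hne23 : φ' + αs 2 ≠ φ' + αs 1 + αs 2 := by
    intro h
    have h0 : (0:ℝ) • αs 0 + (1:ℝ) • αs 1 + (0:ℝ) • αs 2 + (0:ℝ) • αs 3 = 0 := by
      linear_combination (norm := module) hX2 - hX3 - h
    simpa using (hcoef _ _ _ _ h0).2.1
  have hne24 : φ' + αs 2 ≠ φ := by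
    intro h
    have h0 : (1:ℝ) • αs 0 + (1:ℝ) • αs 1 + (0:ℝ) • αs 2 + (0:ℝ) • αs 3 = 0 := by
      linear_combination (norm := module) hX2 - hX4 - h
    simpa using (hcoef _ _ _ _ h0).1
  have hne34 : φ' + αs 1 + αs 2 ≠ φ := by
    intro h
    have h0 : (1:ℝ) • αs 0 + (0:ℝ) • αs 1 + (0:ℝ) • αs 2 + (0:ℝ) • αs 3 = 0 := by
      linear_combination (norm := module) hX3 - hX4 - h
    simpa using (hcoef _ _ _ _ h0).1
  -- the six sums are not roots
  have hnr1 : ∀ v : V, v = (2:ℝ) • αs 0 + (4:ℝ) • αs 1 + (7:ℝ) • αs 2 + (4:ℝ) • αs 3 → v ∉ Φ := by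
    intro v hv hmem
    obtain ⟨m, hm⟩ := hΦ.crystallographic (αs 3) (hbase.mem 3) v hmem
    have hv0 : v ≠ 0 := fun h => hΦ.nonzero (h ▸ hmem)
    have hvv : (0:ℝ) < ⟪v,v⟫ :=
      lt_of_le_of_ne real_inner_self_nonneg (Ne.symm (inner_self_ne_zero.mpr hv0))
    have h0 := (div_eq_iff (ne_of_gt hvv)).mp hm
    rw [hv, hip3, hinner] at h0
    have hr : (1:ℝ) = (m:ℝ)*5 := mul_right_cancel₀ ht' (by linear_combination h0)
    have hz : (1:ℤ) = m*5 := by exact_mod_cast hr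
    omega
  have hnr2 : ∀ v : V, v = (2:ℝ) • αs 0 + (5:ℝ) • αs 1 + (7:ℝ) • αs 2 + (4:ℝ) • αs 3 → v ∉ Φ := by
    intro v hv hmem
    obtain ⟨m, hm⟩ := hΦ.crystallographic (αs 3) (hbase.mem 3) v hmem
    have hv0 : v ≠ 0 := fun h => hΦ.nonzero (h ▸ hmem)
    have hvv : (0:ℝ) < ⟪v,v⟫ :=
      lt_of_le_of_ne real_inner_self_nonneg (Ne.symm (inner_self_ne_zero.mpr hv0))
    have h0 := (div_eq_iff (ne_of_gt hvv)).mp hm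
    rw [hv, hip3, hinner] at h0
    have hr : (1:ℝ) = (m:ℝ)*5 := mul_right_cancel₀ ht' (by linear_combination h0)
    have hz : (1:ℤ) = m*5 := by exact_mod_cast hr
    omega
  have hnr3 : ∀ v : V, v = (3:ℝ) • αs 0 + (5:ℝ) • αs 1 + (7:ℝ) • αs 2 + (4:ℝ) • αs 3 → v ∉ Φ := by
    intro v hv hmem
    obtain ⟨m, hm⟩ := hΦ.crystallographic (αs 3) (hbase.mem 3) v hmem
    have hv0 : v ≠ 0 := fun h => hΦ.nonzero (h ▸ hmem)
    have hvv : (0:ℝ) < ⟪v,v⟫ :=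
      lt_of_le_of_ne real_inner_self_nonneg (Ne.symm (inner_self_ne_zero.mpr hv0))
    have h0 := (div_eq_iff (ne_of_gt hvv)).mp hm
    rw [hv, hip3, hinner] at h0
    have hr : (1:ℝ) = (m:ℝ)*5 := mul_right_cancel₀ ht' (by linear_combination h0)
    have hz : (1:ℤ) = m*5 := by exact_mod_cast hr
    omega
  have hnr4 : ∀ v : V, v = (2:ℝ) • αs 0 + (5:ℝ) • αs 1 + (8:ℝ) • αs 2 + (4:ℝ) • αs 3 → v ∉ Φ := by
    intro v hv hmem
    obtain ⟨m, hm⟩ := hΦ.crystallographic (αs 0) (hbase.mem 0) v hmem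
    have hv0 : v ≠ 0 := fun h => hΦ.nonzero (h ▸ hmem)
    have hvv : (0:ℝ) < ⟪v,v⟫ :=
      lt_of_le_of_ne real_inner_self_nonneg (Ne.symm (inner_self_ne_zero.mpr hv0))
    have h0 := (div_eq_iff (ne_of_gt hvv)).mp hm
    rw [hv, hip0, hinner] at h0
    have hr : (-2:ℝ) = (m:ℝ)*6 := mul_right_cancel₀ ht' (by linear_combination h0)
    have hz : (-2:ℤ) = m*6 := by exact_mod_cast hr
    omega
  have hnr5 : ∀ v : V, v = (3:ℝ) • αs 0 + (5:ℝ) • αs 1 + (8:ℝ) • αs 2 + (4:ℝ) • αs 3 → v ∉ Φ := by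
    intro v hv hmem
    obtain ⟨m, hm⟩ := hΦ.crystallographic (αs 0) (hbase.mem 0) v hmem
    have hv0 : v ≠ 0 := fun h => hΦ.nonzero (h ▸ hmem)
    have hvv : (0:ℝ) < ⟪v,v⟫ :=
      lt_of_le_of_ne real_inner_self_nonneg (Ne.symm (inner_self_ne_zero.mpr hv0))
    have h0 := (div_eq_iff (ne_of_gt hvv)).mp hm
    rw [hv, hip0, hinner] at h0
    have hr : (2:ℝ) = (m:ℝ)*6 := mul_right_cancel₀ ht' (by linear_combination h0)
    have hz : (2:ℤ) = m*6 := by exact_mod_cast hr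
    omega
  have hnr6 : ∀ v : V, v = (3:ℝ) • αs 0 + (6:ℝ) • αs 1 + (8:ℝ) • αs 2 + (4:ℝ) • αs 3 → v ∉ Φ := by
    intro v hv hmem
    obtain ⟨m, hm⟩ := hΦ.crystallographic (αs 1) (hbase.mem 1) v hmem
    have hv0 : v ≠ 0 := fun h => hΦ.nonzero (h ▸ hmem)
    have hvv : (0:ℝ) < ⟪v,v⟫ :=
      lt_of_le_of_ne real_inner_self_nonneg (Ne.symm (inner_self_ne_zero.mpr hv0))
    have h0 := (div_eq_iff (ne_of_gt hvv)).mp hm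
    rw [hv, hip1, hinner] at h0
    have hr : (2:ℝ) = (m:ℝ)*6 := mul_right_cancel₀ ht' (by linear_combination h0)
    have hz : (2:ℤ) = m*6 := by exact_mod_cast hr
    omega
  refine ⟨hDeq, ?_, ?_⟩
  · rw [hDeq]
    rw [Set.ncard_insert_of_notMem (by simp [hne12, hne13, hne14]),
      Set.ncard_insert_of_notMem (by simp [hne23, hne24]),
      Set.ncard_insert_of_notMem (by simp [hne34]), Set.ncard_singleton]
  · intro β hβ γ hγ hneq
    rcases hclass β hβ with rfl|rfl|rfl|rfl <;> rcases hclass γ hγ with rfl|rfl|rfl|rfl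
    · exact absurd rfl hneq
    · exact hnr1 _ (by rw [hφ']; module)
    · exact hnr2 _ (by rw [hφ']; module)
    · exact hnr3 _ (by rw [hφ', hφ]; module)
    · exact hnr1 _ (by rw [hφ']; module)
    · exact absurd rfl hneq
    · exact hnr4 _ (by rw [hφ']; module)
    · exact hnr5 _ (by rw [hφ', hφ]; module)
    · exact hnr2 _ (by rw [hφ']; module)
    · exact hnr4 _ (by rw [hφ']; module)
    · exact absurd rfl hneq
    · exact hnr6 _ (by rw [hφ', hφ]; module)
    · exact hnr3 _ (by rw [hφ', hφ]; module)
    · exact hnr5 _ (by rw [hφ', hφ]; module)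
    · exact hnr6 _ (by rw [hφ', hφ]; module)
    · exact absurd rfl hneq

end Paper
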